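/- arXiv:2110.14460 — 5 statements merged into one kernel-verified Lean document; each statement's English description precedes it below -/
import Mathlib

section
/- In any cycle of length n ≥ 5 (in particular odd cycles), the maximum over nonnegative loads summing to D of the total edge flow equals D²/4. -/
open Finset
open scoped Fin.CommRing

lemma cycle_ineq (n : ℕ) (hn : 5 ≤ n) (b : ℕ → ℝ) (hb : ∀ i, 0 ≤ b i)
    (hbn : b n = b 0) (hmin : b (n-1) ≤ b (n-2)) :
    ∑ i ∈ range n, b i * b (i+1) ≤ (∑ i ∈ range n, b i)^2/4 := by
  set O := ∑ i ∈ (range n).filter (fun i => i % 2 = 0), b i with hO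
  set E := ∑ i ∈ (range n).filter (fun i => ¬ i % 2 = 0), b i with hE
  have hOE : O + E = ∑ i ∈ range n, b i := sum_filter_add_sum_filter_not _ _ _
  suffices h : ∑ i ∈ range n, b i * b (i+1) ≤ O * E by
    rw [← hOE]; nlinarith [sq_nonneg (O - E)]
  set g : ℕ → ℕ × ℕ := fun i =>
    if i = n-1 then (if n % 2 = 0 then (0, n-1) else (0, n-2))
    else if i % 2 = 0 then (i, i+1) else (i+1, i) with hg
  have h1 : ∀ i ∈ range n, b i * b (i+1) ≤ b (g i).1 * b (g i).2 := by
    intro i hi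
    simp only [hg]
    by_cases hin : i = n-1
    · rw [if_pos hin]
      have hi1 : i + 1 = n := by rw [hin]; omega
      rw [hi1, hbn, hin]
      by_cases hpar : n % 2 = 0
      · rw [if_pos hpar]; simp [mul_comm]
      · rw [if_neg hpar]
        calc b (n-1) * b 0 ≤ b (n-2) * b 0 :=
              mul_le_mul_of_nonneg_right hmin (hb 0)
          _ = b 0 * b (n-2) := mul_comm _ _
    · rw [if_neg hin]
      by_cases hpar : i % 2 = 0
      · rw [if_pos hpar]
      · rw [if_neg hpar]; simp [mul_comm]
  have h2 : ∀ i ∈ range n, ∀ j ∈ range n, g i = g j → i = j := by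
    intro i hi j hj hij
    simp only [mem_range] at hi hj
    simp only [hg] at hij
    split_ifs at hij <;> simp only [Prod.mk.injEq] at hij <;> omega
  have h3 : ∀ i ∈ range n,
      g i ∈ ((range n).filter (fun i => i % 2 = 0)) ×ˢ
            ((range n).filter (fun i => ¬ i % 2 = 0)) := by
    intro i hi
    simp only [mem_range] at hi
    simp only [hg]
    split_ifs <;> simp [mem_product, mem_filter, mem_range] <;> omega
  calc ∑ i ∈ range n, b i * b (i+1)
      ≤ ∑ i ∈ range n, b (g i).1 * b (g i).2 := sum_le_sum h1
    _ = ∑ p ∈ (range n).image g, b p.1 * b p.2 := by rw [sum_image h2]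
    _ ≤ ∑ p ∈ ((range n).filter (fun i => i % 2 = 0)) ×ˢ
            ((range n).filter (fun i => ¬ i % 2 = 0)), b p.1 * b p.2 := by
        apply sum_le_sum_of_subset_of_nonneg
        · exact image_subset_iff.2 h3
        · exact fun p _ _ => mul_nonneg (hb _) (hb _)
    _ = O * E := by rw [sum_product, ← sum_mul_sum]

lemma neigh_filter (N : ℕ) (u : Fin (N + 5))
    [inst : DecidableRel (SimpleGraph.cycleGraph (N+5)).Adj] :
    (univ.filter (fun v => (SimpleGraph.cycleGraph (N+5)).Adj u v)) = {u - 1, u + 1} := by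
  ext v
  simp only [mem_filter, mem_univ, true_and, mem_insert, mem_singleton,
    SimpleGraph.cycleGraph_adj']
  have h1 : ((1 : Fin (N+5)).val) = 1 := rfl
  constructor
  · rintro (h | h)
    · left
      have h2 : u - v = 1 := Fin.ext (by rw [h1]; exact h)
      linear_combination -h2
    · right
      have h2 : v - u = 1 := Fin.ext (by rw [h1]; exact h)
      linear_combination h2
  · rintro (h | h)
    · left; rw [h]
      have h2 : u - (u - 1) = 1 := by ring
      rw [h2]; exact h1
    · right; rw [h]
      have h2 : u + 1 - u = 1 := by ring
      rw [h2]; exact h1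

lemma two_ne (N : ℕ) : (1 : Fin (N+5)) + 1 ≠ 0 := by
  intro h
  have h3 : ((1 : Fin (N+5)) + 1).val = (1 + 1) % (N+5) := Fin.val_add _ _
  rw [h] at h3
  rw [Nat.mod_eq_of_lt (by omega)] at h3
  exact absurd h3.symm (by simp)

lemma sub_ne_add (N : ℕ) (u : Fin (N+5)) : u - 1 ≠ u + 1 := by
  intro h
  exact two_ne N (by linear_combination -h)

lemma flow_eq (N : ℕ) (m : Fin (N+5) → ℝ)
    [inst : DecidableRel (SimpleGraph.cycleGraph (N+5)).Adj] :
    (∑ u : Fin (N+5), ∑ v : Fin (N+5),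
      if (SimpleGraph.cycleGraph (N+5)).Adj u v then m u * m v else 0)
    = 2 * ∑ u : Fin (N+5), m u * m (u + 1) := by
  have step : ∀ u : Fin (N+5),
      (∑ v : Fin (N+5), if (SimpleGraph.cycleGraph (N+5)).Adj u v then m u * m v else 0)
      = m u * m (u - 1) + m u * m (u + 1) := by
    intro u
    rw [← sum_filter, neigh_filter N u, sum_pair (sub_ne_add N u)]
  rw [sum_congr rfl (fun u _ => step u), sum_add_distrib]
  have h4 : ∑ u : Fin (N+5), m u * m (u - 1) = ∑ u : Fin (N+5), m (u+1) * m u := by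
    apply Fintype.sum_equiv (Equiv.subRight (1 : Fin (N+5)))
    intro u
    simp only [Equiv.subRight_apply]
    rw [sub_add_cancel]
  rw [h4, two_mul]
  congr 1
  exact Fintype.sum_congr _ _ (fun u => mul_comm _ _)

lemma fin_one_ne_zero (N : ℕ) : (1 : Fin (N+5)) ≠ 0 := by
  intro h
  exact absurd (congrArg Fin.val h) (by simp)

/-- In a cycle of length `n ≥ 5` the maximum of the total edge flow over
nonnegative loads summing to `D` equals `D ^ 2 / 4`. -/
theorem cycle_max_flow (n : ℕ) (hn : 5 ≤ n) (D : ℝ) (hD : 0 ≤ D)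
    [DecidableRel (SimpleGraph.cycleGraph n).Adj] :
    IsGreatest {F : ℝ | ∃ m : Fin n → ℝ, (∀ i, 0 ≤ m i) ∧ (∑ i, m i) = D ∧
        F = (∑ u : Fin n, ∑ v : Fin n,
          if (SimpleGraph.cycleGraph n).Adj u v then m u * m v else 0) / 2}
      (D ^ 2 / 4) := by
  obtain ⟨N, rfl⟩ : ∃ N, n = N + 5 := ⟨n - 5, by omega⟩
  have hD2 : (0:ℝ) ≤ D / 2 := by linarith
  have h10 : (1 : Fin (N+5)) ≠ 0 := fin_one_ne_zero N
  have h11 : (1 : Fin (N+5)) + 1 ≠ 1 := fun h => fin_one_ne_zero N (by linear_combination h)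
  constructor
  · -- membership
    refine ⟨fun i => (if i = 0 then D/2 else 0) + (if i = 1 then D/2 else 0), ?_, ?_, ?_⟩
    · intro i
      show 0 ≤ (if i = 0 then D/2 else 0) + (if i = 1 then D/2 else 0)
      split_ifs <;> linarith
    · rw [sum_add_distrib, sum_ite_eq' univ (0 : Fin (N+5)) (fun _ => D/2),
        sum_ite_eq' univ (1 : Fin (N+5)) (fun _ => D/2), if_pos (mem_univ _),
        if_pos (mem_univ _)]
      ring
    · rw [flow_eq]
      set m : Fin (N+5) → ℝ := fun i => (if i = 0 then D/2 else 0) + (if i = 1 then D/2 else 0)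
        with hm
      have hz : ∀ b : Fin (N+5), b ≠ 0 → m b * m (b+1) = 0 := by
        intro b hb
        by_cases hb1 : b = 1
        · subst hb1
          have h2 : m (1+1) = 0 := by simp [hm, two_ne N, h11]
          rw [h2, mul_zero]
        · have h2 : m b = 0 := by simp [hm, hb, hb1]
          rw [h2, zero_mul]
      have hkey : ∑ u : Fin (N+5), m u * m (u + 1) = D^2/4 := by
        calc ∑ u : Fin (N+5), m u * m (u+1) = m 0 * m (0+1) := Fintype.sum_eq_single 0 hz
          _ = D^2/4 := by
              rw [zero_add]
              simp [hm, fin_one_ne_zero N, Ne.symm (fin_one_ne_zero N)]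
              ring
      rw [hkey]; ring
  · -- upper bound
    rintro F ⟨m, hm0, hmD, rfl⟩
    rw [flow_eq]
    obtain ⟨k, -, hk⟩ := Finset.exists_min_image univ m ⟨0, mem_univ 0⟩
    set b : ℕ → ℝ := fun i => m ((k.val + 1 + i : ℕ) : Fin (N+5)) with hb
    have hbnn : ∀ i, 0 ≤ b i := fun i => hm0 _
    have hprod : ∑ i ∈ range (N+5), b i * b (i+1)
        = ∑ i : Fin (N+5), m i * m (i+1) := by
      rw [← Fin.sum_univ_eq_sum_range (fun i => b i * b (i+1)) (N+5)]
      apply Fintype.sum_equiv (Equiv.addLeft (k + 1 : Fin (N+5)))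
      intro i
      simp only [Equiv.coe_addLeft, hb]
      have e1 : ((k.val + 1 + i.val : ℕ) : Fin (N+5)) = k + 1 + i := by
        push_cast [Fin.cast_val_eq_self]; ring
      have e2 : ((k.val + 1 + (i.val + 1) : ℕ) : Fin (N+5)) = k + 1 + i + 1 := by
        push_cast [Fin.cast_val_eq_self]; ring
      rw [e1, e2]
    have hsum : ∑ i ∈ range (N+5), b i = D := by
      rw [← Fin.sum_univ_eq_sum_range (fun i => b i) (N+5), ← hmD]
      apply Fintype.sum_equiv (Equiv.addLeft (k + 1 : Fin (N+5)))
      intro i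
      simp only [Equiv.coe_addLeft, hb]
      have e1 : ((k.val + 1 + i.val : ℕ) : Fin (N+5)) = k + 1 + i := by
        push_cast [Fin.cast_val_eq_self]; ring
      rw [e1]
    have hbn : b (N+5) = b 0 := by
      show m (((k.val + 1) + (N+5) : ℕ) : Fin (N+5)) = m ((k.val + 1 + 0 : ℕ) : Fin (N+5))
      congr 1
      apply Fin.ext
      rw [Fin.val_natCast, Fin.val_natCast, Nat.add_zero, Nat.add_mod_right]
    have hminb : b (N+5-1) ≤ b (N+5-2) := by
      have hval : b (N+4) = m k := by
        show m ((k.val + 1 + (N+4) : ℕ) : Fin (N+5)) = m k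
        congr 1
        rw [show k.val + 1 + (N+4) = k.val + (N+5) by ring, Nat.cast_add,
          Fin.natCast_self, add_zero, Fin.cast_val_eq_self]
      show b (N+4) ≤ b (N+3)
      rw [hval]
      exact hk _ (mem_univ _)
    have hfin := cycle_ineq (N+5) (by omega) b hbnn hbn hminb
    rw [hprod, hsum] at hfin
    linarith
end

section
/- Let G be a graph with vertex loads m ≥ 0, and let i, j be non-adjacent vertices with i ≠ j. If φ(i) ≤ φ(j), where φ(v) = ∑_{u adjacent to v} m_u, then transferring the entire load of i to j (i.e., replacing m_i by 0 and m_j by m_j + m_i) does not decrease the total flow ∑_{edges {u,v}} m_u m_v. -/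
open Finset

/-- Transferring the whole load of a vertex `i` to a non-adjacent vertex `j` with
`φ i ≤ φ j` (where `φ v = ∑_{u ~ v} m u`) does not decrease the total flow. -/
theorem load_shift_flow_mono {V : Type*} [Fintype V] [DecidableEq V]
    (G : SimpleGraph V) [DecidableRel G.Adj]
    (m : V → ℝ) (hm : ∀ v, 0 ≤ m v) (i j : V) (hij : i ≠ j) (hnadj : ¬ G.Adj i j)
    (hφ : ∑ u ∈ G.neighborFinset i, m u ≤ ∑ u ∈ G.neighborFinset j, m u) :
    (∑ u, ∑ v, if G.Adj u v then m u * m v else 0) / 2 ≤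
      (∑ u, ∑ v, if G.Adj u v then
          (if u = i then 0 else if u = j then m j + m i else m u) *
          (if v = i then 0 else if v = j then m j + m i else m v) else 0) / 2 := by
  have hnadj' : ¬ G.Adj j i := fun h => hnadj h.symm
  have expand : ∀ u v : V, (if G.Adj u v then
          (if u = i then 0 else if u = j then m j + m i else m u) *
          (if v = i then 0 else if v = j then m j + m i else m v) else 0)
      = (if G.Adj u v then m u * m v else 0)
        + ((if v = j then (if G.Adj u v then m u * m i else 0) else 0)
          - (if v = i then (if G.Adj u v then m u * m i else 0) else 0))
        + ((if u = j then (if G.Adj u v then m i * m v else 0) else 0)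
          - (if u = i then (if G.Adj u v then m i * m v else 0) else 0)) := by
    intro u v
    by_cases h : G.Adj u v
    · by_cases h1 : u = i <;> by_cases h2 : u = j <;> by_cases h3 : v = i <;>
        by_cases h4 : v = j <;> subst_eqs <;>
        simp_all [SimpleGraph.irrefl] <;> ring
    · simp [h]
  have sum_eq : ∀ (w : V) (f : V → ℝ), (∑ u, if G.Adj u w then f u else 0)
      = ∑ u ∈ G.neighborFinset w, f u := by
    intro w f
    rw [SimpleGraph.neighborFinset_eq_filter, Finset.sum_filter]
    refine Finset.sum_congr rfl fun u _ => ?_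
    by_cases h : G.Adj u w
    · rw [if_pos h, if_pos h.symm]
    · rw [if_neg h, if_neg (fun h' => h h'.symm)]
  have sum_eq2 : ∀ (w : V) (f : V → ℝ), (∑ v, if G.Adj w v then f v else 0)
      = ∑ v ∈ G.neighborFinset w, f v := by
    intro w f
    rw [SimpleGraph.neighborFinset_eq_filter, Finset.sum_filter]
  have key : (∑ u, ∑ v, if G.Adj u v then
          (if u = i then 0 else if u = j then m j + m i else m u) *
          (if v = i then 0 else if v = j then m j + m i else m v) else 0)
      = (∑ u, ∑ v, if G.Adj u v then m u * m v else 0)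
        + 2 * m i * ((∑ u ∈ G.neighborFinset j, m u) - (∑ u ∈ G.neighborFinset i, m u)) := by
    simp only [expand, Finset.sum_add_distrib, Finset.sum_sub_distrib]
    have e1 : (∑ u, ∑ v, if v = j then (if G.Adj u v then m u * m i else 0) else 0)
        = (∑ u ∈ G.neighborFinset j, m u) * m i := by
      simp only [Finset.sum_ite_eq' Finset.univ j, Finset.mem_univ, if_true]
      rw [sum_eq j, Finset.sum_mul]
    have e2 : (∑ u, ∑ v, if v = i then (if G.Adj u v then m u * m i else 0) else 0)
        = (∑ u ∈ G.neighborFinset i, m u) * m i := by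
      simp only [Finset.sum_ite_eq' Finset.univ i, Finset.mem_univ, if_true]
      rw [sum_eq i, Finset.sum_mul]
    have e3 : (∑ u, ∑ v, if u = j then (if G.Adj u v then m i * m v else 0) else 0)
        = m i * (∑ v ∈ G.neighborFinset j, m v) := by
      rw [Finset.sum_comm]
      simp only [Finset.sum_ite_eq' Finset.univ j, Finset.mem_univ, if_true]
      rw [sum_eq2 j, Finset.mul_sum]
    have e4 : (∑ u, ∑ v, if u = i then (if G.Adj u v then m i * m v else 0) else 0)
        = m i * (∑ v ∈ G.neighborFinset i, m v) := by
      rw [Finset.sum_comm]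
      simp only [Finset.sum_ite_eq' Finset.univ i, Finset.mem_univ, if_true]
      rw [sum_eq2 i, Finset.mul_sum]
    rw [e1, e2, e3, e4]; ring
  rw [key]
  have h0 : 0 ≤ 2 * m i * ((∑ u ∈ G.neighborFinset j, m u) - (∑ u ∈ G.neighborFinset i, m u)) := by
    have := hm i
    nlinarith
  linarith
end

section
/- (Motzkin–Straus) For a finite simple graph G with clique number ω(G), the maximum over nonnegative loads m with ∑_v m_v = D of the flow ∑_{{u,v}∈E} m_u m_v equals (D²/2)(1 − 1/ω(G)). -/
open Finset

section aux
variable {V : Type*} [Fintype V] [DecidableEq V] (G : SimpleGraph V) [DecidableRel G.Adj]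

/-- neighborhood sum -/
def MSt (m : V → ℝ) (x : V) : ℝ := ∑ y, if G.Adj x y then m y else 0

def MSflw (m : V → ℝ) : ℝ := ∑ x, ∑ y, if G.Adj x y then m x * m y else 0

lemma MSflw_eq (m : V → ℝ) : MSflw G m = ∑ x, m x * MSt G m x := by
  simp [MSflw, MSt, Finset.mul_sum, mul_ite]

lemma MSt_comm (m : V → ℝ) (w : V) :
    (∑ x, if G.Adj x w then m x else 0) = MSt G m w := by
  simp [MSt, G.adj_comm]

lemma sum_dd (u v : V) (f : V → ℝ) :
    ∑ x, ((if x = v then (1:ℝ) else 0) - (if x = u then 1 else 0)) * f x = f v - f u := by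
  simp [sub_mul, ite_mul, Finset.sum_sub_distrib]

lemma inner_dd (u v x : V) :
    (∑ y, if G.Adj x y then ((if y = v then (1:ℝ) else 0) - (if y = u then 1 else 0)) else 0)
      = (if G.Adj x v then (1:ℝ) else 0) - (if G.Adj x u then 1 else 0) := by
  have : ∀ y, (if G.Adj x y then ((if y = v then (1:ℝ) else 0) - (if y = u then 1 else 0)) else 0)
      = (if y = v then (if G.Adj x y then (1:ℝ) else 0) else 0)
        - (if y = u then (if G.Adj x y then (1:ℝ) else 0) else 0) := by
    intro y; split_ifs <;> ring
  rw [Finset.sum_congr rfl fun y _ => this y, Finset.sum_sub_distrib]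
  simp

lemma MSflw_shift (m : V → ℝ) (u v : V) (hnadj : ¬ G.Adj u v) (c : ℝ) :
    MSflw G (fun x => m x + c * ((if x = v then 1 else 0) - (if x = u then 1 else 0)))
      = MSflw G m + 2 * c * (MSt G m v - MSt G m u) := by
  set d : V → ℝ := fun x => (if x = v then (1:ℝ) else 0) - (if x = u then 1 else 0) with hd
  have expand : MSflw G (fun x => m x + c * d x)
      = MSflw G m
        + c * (∑ x, ∑ y, if G.Adj x y then d x * m y else 0)
        + c * (∑ x, ∑ y, if G.Adj x y then m x * d y else 0)
        + c^2 * (∑ x, ∑ y, if G.Adj x y then d x * d y else 0) := by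
    unfold MSflw
    rw [Finset.mul_sum, Finset.mul_sum, Finset.mul_sum]
    rw [← Finset.sum_add_distrib, ← Finset.sum_add_distrib, ← Finset.sum_add_distrib]
    refine Finset.sum_congr rfl fun x _ => ?_
    rw [Finset.mul_sum, Finset.mul_sum, Finset.mul_sum]
    rw [← Finset.sum_add_distrib, ← Finset.sum_add_distrib, ← Finset.sum_add_distrib]
    refine Finset.sum_congr rfl fun y _ => ?_
    split_ifs <;> ring
  have h1 : (∑ x, ∑ y, if G.Adj x y then d x * m y else 0) = MSt G m v - MSt G m u := by
    have : ∀ x, (∑ y, if G.Adj x y then d x * m y else 0) = d x * MSt G m x := by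
      intro x; simp [MSt, Finset.mul_sum, mul_ite]
    rw [Finset.sum_congr rfl fun x _ => this x, hd, sum_dd]
  have h2 : (∑ x, ∑ y, if G.Adj x y then m x * d y else 0) = MSt G m v - MSt G m u := by
    have : ∀ x, (∑ y, if G.Adj x y then m x * d y else 0)
        = m x * ((if G.Adj x v then (1:ℝ) else 0) - (if G.Adj x u then 1 else 0)) := by
      intro x
      rw [show (∑ y, if G.Adj x y then m x * d y else 0)
          = m x * (∑ y, if G.Adj x y then d y else 0) by simp [Finset.mul_sum, mul_ite]]
      rw [hd, inner_dd]
    rw [Finset.sum_congr rfl fun x _ => this x]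
    rw [Finset.sum_congr rfl fun x _ =>
      (show m x * ((if G.Adj x v then (1:ℝ) else 0) - (if G.Adj x u then 1 else 0))
        = (if G.Adj x v then m x else 0) - (if G.Adj x u then m x else 0) by split_ifs <;> ring)]
    rw [Finset.sum_sub_distrib, MSt_comm, MSt_comm]
  have h3 : (∑ x, ∑ y, if G.Adj x y then d x * d y else 0) = 0 := by
    have : ∀ x, (∑ y, if G.Adj x y then d x * d y else 0)
        = d x * ((if G.Adj x v then (1:ℝ) else 0) - (if G.Adj x u then 1 else 0)) := by
      intro x
      rw [show (∑ y, if G.Adj x y then d x * d y else 0)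
          = d x * (∑ y, if G.Adj x y then d y else 0) by simp [Finset.mul_sum, mul_ite]]
      rw [hd, inner_dd]
    rw [Finset.sum_congr rfl fun x _ => this x, hd]
    rw [sum_dd u v (fun x => (if G.Adj x v then (1:ℝ) else 0) - (if G.Adj x u then 1 else 0))]
    have hvu : ¬ G.Adj v u := fun h => hnadj h.symm
    simp [hnadj, hvu, G.irrefl]
  rw [expand, h1, h2, h3]; ring

lemma MSstep (m : V → ℝ) (h0 : ∀ x, 0 ≤ m x) (u v : V) (huv : u ≠ v) (hna : ¬ G.Adj u v)
    (hu : m u ≠ 0) (hv : m v ≠ 0) (hT : MSt G m u ≤ MSt G m v) :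
    ∃ m' : V → ℝ, (∀ x, 0 ≤ m' x) ∧ (∑ x, m' x) = ∑ x, m x ∧ MSflw G m ≤ MSflw G m' ∧
      univ.filter (fun x => m' x ≠ 0) = (univ.filter (fun x => m x ≠ 0)).erase u := by
  set m' : V → ℝ :=
    fun x => m x + m u * ((if x = v then 1 else 0) - (if x = u then 1 else 0)) with hm'
  have hm'u : m' u = 0 := by simp [hm', huv]
  have hm'v : m' v = m v + m u := by simp [hm', huv.symm]
  have hm'x : ∀ x, x ≠ u → x ≠ v → m' x = m x := by intro x hxu hxv; simp [hm', hxu, hxv]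
  refine ⟨m', ?_, ?_, ?_, ?_⟩
  · intro x
    by_cases hxu : x = u
    · subst hxu; rw [hm'u]
    · by_cases hxv : x = v
      · subst hxv; rw [hm'v]; exact add_nonneg (h0 _) (h0 _)
      · rw [hm'x x hxu hxv]; exact h0 x
  · rw [hm']
    rw [Finset.sum_add_distrib, ← Finset.mul_sum]
    simp [Finset.sum_sub_distrib]
  · rw [hm', MSflw_shift G m u v hna (m u)]
    nlinarith [h0 u]
  · ext x
    simp only [Finset.mem_filter, Finset.mem_univ, true_and, Finset.mem_erase]
    by_cases hxu : x = u
    · subst hxu; simp [hm'u]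
    · by_cases hxv : x = v
      · subst hxv; rw [hm'v]
        constructor
        · intro _; exact ⟨hxu, hv⟩
        · intro _
          have hvpos := (h0 _).lt_of_ne (Ne.symm hv)
          have := h0 u
          exact ne_of_gt (by linarith)
      · rw [hm'x x hxu hxv]; tauto

lemma MSclique_case (m : V → ℝ) (h0 : ∀ x, 0 ≤ m x)
    (hcl : G.IsClique (univ.filter (fun x => m x ≠ 0) : Finset V)) :
    MSflw G m ≤ (1 - 1 / (G.cliqueNum : ℝ)) * (∑ x, m x) ^ 2 := by
  set s := univ.filter (fun x => m x ≠ 0) with hs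
  have hsum : ∑ x ∈ s, m x = ∑ x, m x := by
    rw [hs]; exact Finset.sum_filter_ne_zero _
  have hsq : ∑ x ∈ s, (m x)^2 = ∑ x, (m x)^2 := by
    refine Finset.sum_subset (Finset.filter_subset _ _) ?_
    intro x _ hx
    simp only [hs, Finset.mem_filter, Finset.mem_univ, true_and, not_not] at hx
    simp [hx]
  -- flow ≤ (∑ m)² − ∑ m²
  have hflow : MSflw G m ≤ (∑ x, m x)^2 - ∑ x, (m x)^2 := by
    have key : ∀ x, (∑ y, if G.Adj x y then m x * m y else 0)
        ≤ (∑ y, m x * m y) - m x * m x := by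
      intro x
      have e1 : (∑ y, if G.Adj x y then m x * m y else 0)
          = ∑ y ∈ univ.erase x, if G.Adj x y then m x * m y else 0 := by
        rw [Finset.sum_erase]; simp [G.irrefl]
      have e2 : (∑ y ∈ univ.erase x, if G.Adj x y then m x * m y else 0)
          ≤ ∑ y ∈ univ.erase x, m x * m y := by
        refine Finset.sum_le_sum fun y _ => ?_
        split_ifs
        · exact le_rfl
        · exact mul_nonneg (h0 x) (h0 y)
      have e3 : (∑ y ∈ univ.erase x, m x * m y) = (∑ y, m x * m y) - m x * m x :=
        Finset.sum_erase_eq_sub (Finset.mem_univ x)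
      rw [e1]; rw [e3] at e2; exact e2
    calc MSflw G m ≤ ∑ x, ((∑ y, m x * m y) - m x * m x) :=
          Finset.sum_le_sum fun x _ => key x
      _ = (∑ x, m x)^2 - ∑ x, (m x)^2 := by
          rw [Finset.sum_sub_distrib]
          congr 1
          · rw [sq, Finset.sum_mul_sum]
          · refine Finset.sum_congr rfl fun x _ => by ring
  by_cases hk : s = ∅
  · have hz : ∀ x, m x = 0 := by
      intro x; by_contra hx
      have hmem : x ∈ s := by simp [hs, hx]
      simp [hk] at hmem
    have h1 : (∑ x, m x) = 0 := Finset.sum_eq_zero fun x _ => hz x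
    have h2 : (∑ x, (m x)^2) = 0 := Finset.sum_eq_zero fun x _ => by rw [hz x]; ring
    rw [h1]; rw [h1, h2] at hflow; simpa using hflow
  · have hk1 : 1 ≤ s.card := Finset.card_pos.mpr (Finset.nonempty_of_ne_empty hk)
    have hkω : s.card ≤ G.cliqueNum := SimpleGraph.IsClique.card_le_cliqueNum (tc := hcl)
    have hω1 : 1 ≤ G.cliqueNum := le_trans hk1 hkω
    have hωpos : (0:ℝ) < (G.cliqueNum : ℝ) := by exact_mod_cast hω1.trans_lt' Nat.zero_lt_one
    have hkω' : ((s.card : ℕ) : ℝ) ≤ (G.cliqueNum : ℝ) := by exact_mod_cast hkω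
    have hcs : (∑ x ∈ s, m x)^2 ≤ (s.card : ℝ) * ∑ x ∈ s, (m x)^2 :=
      sq_sum_le_card_mul_sum_sq
    rw [hsum, hsq] at hcs
    have hQ : 0 ≤ ∑ x, (m x)^2 := Finset.sum_nonneg fun x _ => sq_nonneg _
    have key : (∑ x, m x)^2 ≤ (G.cliqueNum:ℝ) * ∑ x, (m x)^2 :=
      hcs.trans (mul_le_mul_of_nonneg_right hkω' hQ)
    have hdiv : 1 / (G.cliqueNum:ℝ) * (∑ x, m x)^2 ≤ ∑ x, (m x)^2 := by
      rw [div_mul_eq_mul_div, one_mul, div_le_iff₀ hωpos, mul_comm]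
      exact key
    have expand : (1 - 1/(G.cliqueNum:ℝ)) * (∑ x, m x)^2
        = (∑ x, m x)^2 - 1/(G.cliqueNum:ℝ) * (∑ x, m x)^2 := by ring
    rw [expand]
    linarith

lemma MSbound (n : ℕ) : ∀ m : V → ℝ, (univ.filter (fun x => m x ≠ 0)).card ≤ n →
    (∀ x, 0 ≤ m x) →
    MSflw G m ≤ (1 - 1 / (G.cliqueNum : ℝ)) * (∑ x, m x) ^ 2 := by
  induction n with
  | zero =>
    intro m hc h0
    have : (univ.filter (fun x => m x ≠ 0)) = ∅ := Finset.card_eq_zero.mp (Nat.le_zero.mp hc)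
    exact MSclique_case G m h0 (by rw [this]; simp [SimpleGraph.IsClique])
  | succ n ih =>
    intro m hc h0
    by_cases hcl : G.IsClique (univ.filter (fun x => m x ≠ 0) : Finset V)
    · exact MSclique_case G m h0 hcl
    · rw [SimpleGraph.isClique_iff, Set.Pairwise] at hcl
      push_neg at hcl
      obtain ⟨u, hu, v, hv, huv, hna⟩ := hcl
      simp only [Finset.coe_filter, Set.mem_setOf_eq, Finset.mem_univ, true_and] at hu hv
      -- wlog on direction
      have main : ∀ u v : V, m u ≠ 0 → m v ≠ 0 → u ≠ v → ¬ G.Adj u v →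
          MSt G m u ≤ MSt G m v →
          MSflw G m ≤ (1 - 1 / (G.cliqueNum : ℝ)) * (∑ x, m x) ^ 2 := by
        intro u v hu hv huv hna hT
        obtain ⟨m', h0', hsum', hle', hfil'⟩ := MSstep G m h0 u v huv hna hu hv hT
        have hum : u ∈ univ.filter (fun x => m x ≠ 0) := by simp [hu]
        have hcard : (univ.filter (fun x => m' x ≠ 0)).card ≤ n := by
          rw [hfil', Finset.card_erase_of_mem hum]
          omega
        have := ih m' hcard h0'
        rw [hsum'] at this
        exact hle'.trans this
      rcases le_total (MSt G m u) (MSt G m v) with hT | hT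
      · exact main u v hu hv huv hna hT
      · exact main v u hv hu huv.symm (fun h => hna h.symm) hT
end aux


/-- Motzkin–Straus: the maximum of the flow `∑_{{u,v} ∈ E} m u * m v` over
nonnegative loads summing to `D > 0` equals `(D ^ 2 / 2) * (1 - 1 / ω(G))`. -/
theorem motzkin_straus {V : Type*} [Fintype V] [DecidableEq V] [Nonempty V]
    (G : SimpleGraph V) [DecidableRel G.Adj] (D : ℝ) (hD : 0 < D) :
    IsGreatest {F : ℝ | ∃ m : V → ℝ, (∀ v, 0 ≤ m v) ∧ (∑ v, m v) = D ∧
        F = (∑ u, ∑ v, if G.Adj u v then m u * m v else 0) / 2}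
      ((D ^ 2 / 2) * (1 - 1 / (G.cliqueNum : ℝ))) := by
  classical
  obtain ⟨K, hK⟩ := G.exists_isNClique_cliqueNum
  have hω1 : 1 ≤ G.cliqueNum := by
    obtain ⟨v⟩ := (inferInstance : Nonempty V)
    have h : ({v} : Finset V).card ≤ G.cliqueNum :=
      SimpleGraph.IsClique.card_le_cliqueNum (tc := by simp)
    simpa using h
  have hωpos : (0:ℝ) < (G.cliqueNum:ℝ) := by exact_mod_cast Nat.lt_of_lt_of_le Nat.zero_lt_one hω1
  have hωne : (G.cliqueNum:ℝ) ≠ 0 := ne_of_gt hωpos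
  constructor
  · -- the value is attained by uniform weights on a maximum clique
    set c : ℝ := D / (G.cliqueNum:ℝ) with hc
    set m : V → ℝ := fun v => if v ∈ K then c else 0 with hm
    have hKcard : (K.card : ℝ) = (G.cliqueNum : ℝ) := by exact_mod_cast hK.2
    have hK1 : 1 ≤ K.card := by
      have : (1:ℕ) ≤ G.cliqueNum := hω1
      calc 1 ≤ G.cliqueNum := hω1
        _ = K.card := hK.2.symm
    refine ⟨m, ?_, ?_, ?_⟩
    · intro v; rw [hm]; dsimp only; split_ifs
      · positivity
      · exact le_rfl
    · rw [hm]
      rw [Finset.sum_ite_mem, Finset.univ_inter, Finset.sum_const, nsmul_eq_mul, hKcard, hc]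
      field_simp
    · have hT : ∀ x ∈ K, MSt G m x = ((K.card:ℝ) - 1) * c := by
        intro x hx
        have hvanish : ∀ y ∈ (univ : Finset V), y ∉ K.erase x →
            (if G.Adj x y then m y else 0) = 0 := by
          intro y _ hy
          by_cases hyx : y = x
          · subst hyx; simp [G.irrefl]
          · have hyK : y ∉ K := by
              intro hyK; exact hy (Finset.mem_erase.mpr ⟨hyx, hyK⟩)
            simp [hm, hyK]
        have heq := Finset.sum_subset (Finset.subset_univ (K.erase x)) hvanish
        rw [MSt, ← heq]
        have hconst : ∀ y ∈ K.erase x, (if G.Adj x y then m y else 0) = c := by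
          intro y hy
          obtain ⟨hyx, hyK⟩ := Finset.mem_erase.mp hy
          have hadj : G.Adj x y := hK.1 hx hyK (Ne.symm hyx)
          simp [hadj, hm, hyK]
        rw [Finset.sum_congr rfl hconst, Finset.sum_const, nsmul_eq_mul,
          Finset.card_erase_of_mem hx, Nat.cast_sub hK1]
        norm_num
      have hflw : MSflw G m = (K.card:ℝ) * (((K.card:ℝ) - 1) * c * c) := by
        rw [MSflw_eq]
        have hvanish : ∀ x ∈ (univ : Finset V), x ∉ K → m x * MSt G m x = 0 := by
          intro x _ hx; simp [hm, hx]
        rw [← Finset.sum_subset (Finset.subset_univ K) hvanish]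
        have hconst : ∀ x ∈ K, m x * MSt G m x = ((K.card:ℝ) - 1) * c * c := by
          intro x hx; rw [hT x hx, hm]; dsimp only; rw [if_pos hx]; ring
        rw [Finset.sum_congr rfl hconst, Finset.sum_const, nsmul_eq_mul]
      have : (∑ u, ∑ v, if G.Adj u v then m u * m v else 0) = MSflw G m := rfl
      rw [this, hflw, hKcard, hc]
      field_simp
  · -- upper bound
    rintro F ⟨m, h0, hsum, rfl⟩
    have hb := MSbound G (Fintype.card V) m
      (le_trans (Finset.card_filter_le _ _) (by simp)) h0
    rw [hsum] at hb
    have hrw : (D^2/2) * (1 - 1/(G.cliqueNum:ℝ)) = ((1 - 1/(G.cliqueNum:ℝ)) * D^2)/2 := by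
      ring
    have : (∑ u, ∑ v, if G.Adj u v then m u * m v else 0) = MSflw G m := rfl
    rw [this, hrw]
    linarith
end

section
/- (Motzkin–Straus, lower bound) For a finite simple graph G containing a clique K of size ω, distributing the load equally as D/ω on each vertex of K and 0 elsewhere achieves flow (D²/2)(1 − 1/ω); hence the maximum flow is at least (D²/2)(1 − 1/ω(G)). -/
open Finset

/-- Motzkin–Straus lower bound: for a clique `K` of size `ω` in `G`, the load
assignment putting `D / ω` on each vertex of `K` and `0` elsewhere achieves flow
`(D ^ 2 / 2) * (1 - 1 / ω)`. -/
theorem motzkin_straus_lower {V : Type*} [Fintype V] [DecidableEq V]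
    (G : SimpleGraph V) [DecidableRel G.Adj] (K : Finset V) (ω : ℕ) (hω : 0 < ω)
    (hK : G.IsNClique ω K) (D : ℝ) (hD : 0 ≤ D) :
    (∑ u, ∑ v, if G.Adj u v then
        (if u ∈ K then D / ω else 0) * (if v ∈ K then D / ω else 0) else 0) / 2
      = (D ^ 2 / 2) * (1 - 1 / (ω : ℝ)) := by
  have hcard : K.card = ω := hK.2
  set c : ℝ := (D / ω) * (D / ω) with hc
  have hsum : (∑ u, ∑ v, if G.Adj u v then
      (if u ∈ K then D / ω else 0) * (if v ∈ K then D / ω else 0) else 0)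
      = ∑ u ∈ K, ∑ v ∈ K, if u ≠ v then c else 0 := by
    rw [← Finset.sum_subset (Finset.subset_univ K)]
    · refine Finset.sum_congr rfl fun u hu => ?_
      rw [← Finset.sum_subset (Finset.subset_univ K)]
      · refine Finset.sum_congr rfl fun v hv => ?_
        by_cases h : u = v
        · subst h; simp [G.irrefl]
        · have hadj : G.Adj u v := hK.1 hu hv h
          simp [hadj, hu, hv, h, hc]
      · intro v _ hv
        simp [hv]
    · intro u _ hu
      simp [hu]
  have hinner : ∀ u ∈ K, (∑ v ∈ K, if u ≠ v then c else 0)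
      = ((ω : ℝ) - 1) * c := by
    intro u hu
    have : (∑ v ∈ K, if u ≠ v then c else 0)
        = ∑ v ∈ K, (c - if u = v then c else 0) := by
      refine Finset.sum_congr rfl fun v _ => ?_
      by_cases h : u = v <;> simp [h]
    rw [this, Finset.sum_sub_distrib, Finset.sum_const, Finset.sum_ite_eq K u (fun _ => c), hcard]
    simp [hu]
    ring
  rw [hsum, Finset.sum_congr rfl hinner, Finset.sum_const, hcard]
  have hω' : (ω : ℝ) ≠ 0 := Nat.cast_ne_zero.mpr hω.ne'
  rw [hc]
  field_simp [hc]
  have h1 : (ω : ℝ) ^ 2 * (ω : ℝ)⁻¹ ^ 2 = 1 := by rw [← mul_pow, mul_inv_cancel₀ hω', one_pow]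
  linear_combination ((ω : ℝ) * D ^ 2 - D ^ 2) * h1
end

section
/- (Motzkin–Straus, upper bound) For every finite simple graph G and every nonnegative load vector m with ∑_v m_v = D, the flow ∑_{{u,v}∈E} m_u m_v is at most (D²/2)(1 − 1/ω(G)), where ω(G) is the clique number of G. -/
open Finset

section Aux
variable {V : Type*} [Fintype V] [DecidableEq V]

private lemma sum_mul_d (u v : V) (f : V → ℝ) :
    ∑ j, f j * ((if j = u then (1:ℝ) else 0) - (if j = v then 1 else 0)) = f u - f v := by
  simp [mul_sub, mul_ite, Finset.sum_sub_distrib, Finset.sum_ite_eq']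

private lemma sum_d_mul (u v : V) (f : V → ℝ) :
    ∑ j, ((if j = u then (1:ℝ) else 0) - (if j = v then 1 else 0)) * f j = f u - f v := by
  simp [sub_mul, ite_mul, Finset.sum_sub_distrib, Finset.sum_ite_eq']

/-- Shifting weight from `v` to a non-adjacent `u` with larger weighted degree. -/
private lemma step [Fintype V] (G : SimpleGraph V) [DecidableRel G.Adj] (m : V → ℝ)
    (hm : ∀ w, 0 ≤ m w) (u v : V) (huv : u ≠ v) (hadj : ¬ G.Adj u v)
    (hu : m u ≠ 0) (hv : m v ≠ 0)
    (hs : (∑ i, if G.Adj v i then m i else 0) ≤ (∑ i, if G.Adj u i then m i else 0)) :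
    ∃ m' : V → ℝ, (∀ w, 0 ≤ m' w) ∧ (∑ w, m' w = ∑ w, m w) ∧
      ((∑ i, ∑ j, if G.Adj i j then m i * m j else 0) ≤
        (∑ i, ∑ j, if G.Adj i j then m' i * m' j else 0)) ∧
      (univ.filter fun w => m' w ≠ 0).card < (univ.filter fun w => m w ≠ 0).card := by
  have hadj' : ¬ G.Adj v u := fun h => hadj h.symm
  set d : V → ℝ := fun i => (if i = u then (1:ℝ) else 0) - (if i = v then 1 else 0) with hd
  set m' : V → ℝ := fun i => m i + m v * d i with hm'
  have hdu : d u = 1 := by simp [hd, huv]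
  have hdv : d v = -1 := by simp [hd, Ne.symm huv]
  have hdo : ∀ w, w ≠ u → w ≠ v → d w = 0 := by intro w h1 h2; simp [hd, h1, h2]
  have hm'u : m' u = m u + m v := by show m u + m v * d u = _; rw [hdu]; ring
  have hm'v : m' v = 0 := by show m v + m v * d v = 0; rw [hdv]; ring
  have hm'o : ∀ w, w ≠ u → w ≠ v → m' w = m w := by
    intro w h1 h2; simp [hm', hdo w h1 h2]
  refine ⟨m', ?_, ?_, ?_, ?_⟩
  · intro w
    by_cases h1 : w = u
    · rw [h1, hm'u]; have := hm u; have := hm v; linarith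
    by_cases h2 : w = v
    · rw [h2, hm'v]
    · rw [hm'o w h1 h2]; exact hm w
  · have : ∑ w, m' w = ∑ w, m w + m v * ∑ w, d w := by
      simp [hm', Finset.sum_add_distrib, Finset.mul_sum]
    rw [this, hd]
    simp [Finset.sum_sub_distrib]
  · -- flow inequality
    have expand : ∀ i j : V, (if G.Adj i j then m' i * m' j else 0) =
        (if G.Adj i j then m i * m j else 0)
        + m v * ((if G.Adj i j then m i else 0) * d j)
        + m v * (d i * (if G.Adj i j then m j else 0))
        + m v ^ 2 * ((if G.Adj i j then (1:ℝ) else 0) * d i * d j) := by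
      intro i j
      by_cases h : G.Adj i j
      · simp only [if_pos h, hm']; ring
      · simp [h]
    have swap : ∀ x, (∑ i, (if G.Adj i x then m i else 0)) =
        ∑ i, (if G.Adj x i then m i else 0) :=
      fun x => Finset.sum_congr rfl (fun i _ => if_congr (G.adj_comm i x) rfl rfl)
    have hT1 : (∑ i, ∑ j, (if G.Adj i j then m i else 0) * d j) =
        (∑ i, if G.Adj u i then m i else 0) - (∑ i, if G.Adj v i then m i else 0) := by
      have h1 : ∀ i : V, (∑ j, (if G.Adj i j then m i else 0) * d j) =
          (if G.Adj i u then m i else 0) - (if G.Adj i v then m i else 0) := by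
        intro i
        have := sum_mul_d u v (fun j => if G.Adj i j then m i else 0)
        simpa [hd] using this
      rw [Finset.sum_congr rfl fun i _ => h1 i, Finset.sum_sub_distrib, swap u, swap v]
    have hT2 : (∑ i, ∑ j, d i * (if G.Adj i j then m j else 0)) =
        (∑ i, if G.Adj u i then m i else 0) - (∑ i, if G.Adj v i then m i else 0) := by
      have h1 : ∀ i : V, (∑ j, d i * (if G.Adj i j then m j else 0)) =
          d i * (∑ j, if G.Adj i j then m j else 0) := by
        intro i; rw [Finset.mul_sum]
      rw [Finset.sum_congr rfl fun i _ => h1 i]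
      have := sum_d_mul u v (fun i => ∑ j, if G.Adj i j then m j else 0)
      simpa [hd] using this
    have hT3 : (∑ i, ∑ j, (if G.Adj i j then (1:ℝ) else 0) * d i * d j) = 0 := by
      have h1 : ∀ i : V, (∑ j, (if G.Adj i j then (1:ℝ) else 0) * d i * d j) =
          (if G.Adj i u then (1:ℝ) else 0) * d i - (if G.Adj i v then (1:ℝ) else 0) * d i := by
        intro i
        have := sum_mul_d u v (fun j => (if G.Adj i j then (1:ℝ) else 0) * d i)
        simpa [hd] using this
      rw [Finset.sum_congr rfl fun i _ => h1 i, Finset.sum_sub_distrib]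
      have h2 := sum_mul_d u v (fun i => if G.Adj i u then (1:ℝ) else 0)
      have h3 := sum_mul_d u v (fun i => if G.Adj i v then (1:ℝ) else 0)
      simp only [hd] at h2 h3 ⊢
      rw [h2, h3]
      simp [hadj, hadj']
    have key : (∑ i, ∑ j, if G.Adj i j then m' i * m' j else 0) =
        (∑ i, ∑ j, if G.Adj i j then m i * m j else 0)
        + m v * (∑ i, ∑ j, (if G.Adj i j then m i else 0) * d j)
        + m v * (∑ i, ∑ j, d i * (if G.Adj i j then m j else 0))
        + m v ^ 2 * (∑ i, ∑ j, (if G.Adj i j then (1:ℝ) else 0) * d i * d j) := by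
      rw [Finset.sum_congr rfl fun i _ => Finset.sum_congr rfl fun j _ => expand i j]
      simp only [Finset.sum_add_distrib, ← Finset.mul_sum]
    rw [key, hT1, hT2, hT3]
    nlinarith [mul_nonneg (hm v) (sub_nonneg.mpr hs)]
  · -- support shrinks
    have hvmem : v ∈ univ.filter fun w => m w ≠ 0 := by simp [hv]
    have hsub : (univ.filter fun w => m' w ≠ 0) ⊆ (univ.filter fun w => m w ≠ 0).erase v := by
      intro w hw
      simp only [mem_filter, mem_univ, true_and] at hw
      rw [mem_erase]
      constructor
      · rintro rfl; exact hw hm'v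
      · simp only [mem_filter, mem_univ, true_and]
        by_cases h1 : w = u
        · subst h1; exact hu
        by_cases h2 : w = v
        · exact absurd (h2 ▸ hm'v) hw
        · rw [hm'o w h1 h2] at hw; exact hw
    calc (univ.filter fun w => m' w ≠ 0).card
        ≤ ((univ.filter fun w => m w ≠ 0).erase v).card := Finset.card_le_card hsub
      _ < (univ.filter fun w => m w ≠ 0).card :=
        Finset.card_erase_lt_of_mem hvmem
end Aux

private lemma motzkin_main {V : Type*} [Fintype V] [DecidableEq V]
    (G : SimpleGraph V) [DecidableRel G.Adj] (hω : 1 ≤ G.cliqueNum) :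
    ∀ n : ℕ, ∀ m : V → ℝ, (∀ v, 0 ≤ m v) → (univ.filter fun v => m v ≠ 0).card ≤ n →
      (∑ u, ∑ v, if G.Adj u v then m u * m v else 0) ≤
        (∑ v, m v) ^ 2 * (1 - 1 / (G.cliqueNum : ℝ)) := by
  intro n
  induction n with
  | zero =>
    intro m hm hcard
    have : ∀ v, m v = 0 := by
      intro v
      by_contra h
      have : v ∈ univ.filter fun v => m v ≠ 0 := by simp [h]
      have := Finset.card_pos.mpr ⟨v, this⟩
      omega
    simp [this]
  | succ n ih =>
    intro m hm hcard
    by_cases hpair : ∃ u v : V, m u ≠ 0 ∧ m v ≠ 0 ∧ u ≠ v ∧ ¬ G.Adj u v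
    · obtain ⟨u, v, hu, hv, huv, hadj⟩ := hpair
      rcases le_total (∑ i, if G.Adj u i then m i else 0)
          (∑ i, if G.Adj v i then m i else 0) with h | h
      · obtain ⟨m', hm', hsum', hflow, hlt⟩ :=
          step G m hm v u huv.symm (fun h' => hadj h'.symm) hv hu h
        have := ih m' hm' (by omega)
        rw [hsum'] at this
        linarith
      · obtain ⟨m', hm', hsum', hflow, hlt⟩ := step G m hm u v huv hadj hu hv h
        have := ih m' hm' (by omega)
        rw [hsum'] at this
        linarith
    · -- support is a clique
      push_neg at hpair
      set S : Finset V := univ.filter fun v => m v ≠ 0 with hS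
      have hclique : G.IsClique (S : Set V) := by
        intro a ha b hb hab
        simp only [hS, coe_filter, Set.mem_setOf_eq, mem_univ, true_and] at ha hb
        exact hpair a b ha hb hab
      have hcard2 : (S.card : ℝ) ≤ (G.cliqueNum : ℝ) := by
        exact_mod_cast hclique.card_le_cliqueNum
      have hω' : (0:ℝ) < (G.cliqueNum : ℝ) := by exact_mod_cast hω
      -- flow ≤ (∑ m)^2 - ∑ m^2
      have h1 : (∑ u, ∑ v, if G.Adj u v then m u * m v else 0) ≤
          ∑ u, ∑ v, if u ≠ v then m u * m v else 0 := by
        apply Finset.sum_le_sum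
        intro i _
        apply Finset.sum_le_sum
        intro j _
        by_cases h : G.Adj i j
        · rw [if_pos h, if_pos h.ne]
        · rw [if_neg h]
          by_cases h2 : i ≠ j
          · rw [if_pos h2]; exact mul_nonneg (hm i) (hm j)
          · rw [if_neg h2]
      have h2 : (∑ u, ∑ v, if u ≠ v then m u * m v else 0) =
          (∑ v, m v) ^ 2 - ∑ v, m v ^ 2 := by
        have : ∀ i j : V, (if i ≠ j then m i * m j else 0) =
            m i * m j - (if i = j then m i * m j else 0) := by
          intro i j; by_cases h : i = j <;> simp [h]
        rw [Finset.sum_congr rfl fun i _ => Finset.sum_congr rfl fun j _ => this i j]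
        simp only [Finset.sum_sub_distrib, Finset.sum_ite_eq', Finset.sum_ite_eq, mem_univ, if_true,
          ← Finset.mul_sum]
        rw [← Finset.sum_mul, sq]
        congr 1
        exact Finset.sum_congr rfl fun i _ => by rw [sq]
      -- Cauchy–Schwarz over the support
      have h3 : (∑ v, m v) ^ 2 ≤ (G.cliqueNum : ℝ) * ∑ v, m v ^ 2 := by
        have e1 : (∑ v, m v) = ∑ v ∈ S, m v := by
          rw [hS, Finset.sum_filter_ne_zero]
        have e2 : (∑ v ∈ S, m v) ^ 2 ≤ (S.card : ℝ) * ∑ v ∈ S, m v ^ 2 :=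
          sq_sum_le_card_mul_sum_sq
        have e3 : (∑ v ∈ S, m v ^ 2) ≤ ∑ v, m v ^ 2 :=
          Finset.sum_le_sum_of_subset_of_nonneg (Finset.subset_univ S)
            (fun i _ _ => sq_nonneg _)
        calc (∑ v, m v) ^ 2 = (∑ v ∈ S, m v) ^ 2 := by rw [e1]
          _ ≤ (S.card : ℝ) * ∑ v ∈ S, m v ^ 2 := e2
          _ ≤ (G.cliqueNum : ℝ) * ∑ v, m v ^ 2 := by
              apply mul_le_mul hcard2 e3 (Finset.sum_nonneg fun i _ => sq_nonneg _)
                (le_of_lt hω')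
      have h4 : (∑ v, m v) ^ 2 / (G.cliqueNum : ℝ) ≤ ∑ v, m v ^ 2 :=
        (div_le_iff₀ hω').mpr (by linarith [h3])
      have : (∑ v, m v) ^ 2 * (1 - 1 / (G.cliqueNum : ℝ)) =
          (∑ v, m v) ^ 2 - (∑ v, m v) ^ 2 / (G.cliqueNum : ℝ) := by
        field_simp
      linarith


/-- Motzkin–Straus upper bound: for every nonnegative load vector summing to `D`,
the flow is at most `(D ^ 2 / 2) * (1 - 1 / ω(G))`. -/
theorem motzkin_straus_upper {V : Type*} [Fintype V] [DecidableEq V] [Nonempty V]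
    (G : SimpleGraph V) [DecidableRel G.Adj]
    (m : V → ℝ) (hm : ∀ v, 0 ≤ m v) (D : ℝ) (hsum : ∑ v, m v = D) :
    (∑ u, ∑ v, if G.Adj u v then m u * m v else 0) / 2 ≤
      (D ^ 2 / 2) * (1 - 1 / (G.cliqueNum : ℝ)) := by
  have hω : 1 ≤ G.cliqueNum := by
    obtain ⟨v⟩ := ‹Nonempty V›
    have h : G.IsClique ({v} : Finset V) := by simp [SimpleGraph.isClique_iff, Set.Pairwise]
    simpa using h.card_le_cliqueNum
  have := motzkin_main G hω (univ.filter fun v => m v ≠ 0).card m hm le_rfl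
  rw [hsum] at this
  linarith
end
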